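/- arXiv:1807.06578 — 2 statements merged into one kernel-verified Lean document; each statement's English description precedes it below -/
import Mathlib

section
/- Let M be a matroid on a finite linearly ordered set E, let B be a basis of M, and let A be a subset with B \ Int(B) ⊆ A ⊆ B ∪ Ext(B). Then |P_M(A)| = r(M) − r_M(A) and |Q_M(A)| = |A| − r_M(A), where P_M(A) = Int(B) \ A and Q_M(A) = Ext(B) ∩ A. -/
/-!
If `e ∈ A \ B`, then `e` is externally active, and every other element `b` of its fundamental
circuit `C` is larger than `e`. Were `b` internally active, its fundamental cocircuit `K` would
avoid `e` (since `b` is the minimum of `K`), so `C ∩ K = {b}`, which is impossible for a circuit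
and a cocircuit. Hence `C \ {e} ⊆ B \ Int(B) ⊆ A ∩ B`, so `A ∩ B` spans `A` and is a basis of it:
`r_M(A) = |A ∩ B|`. The hypotheses also force `Int(B) \ A = B \ A` and `Ext(B) ∩ A = A \ B`,
so both identities are the cardinality counts `|B| = |A ∩ B| + |B \ A|` and
`|A| = |A ∩ B| + |A \ B|`.
-/

namespace AB
open Set

variable {α : Type*}

/-- A circuit of a matroid: a minimal dependent set. -/
def Circuit (M : Matroid α) (C : Set α) : Prop :=
  M.Dep C ∧ ∀ D, D ⊂ C → M.Indep D

/-- A cocircuit: a circuit of the dual matroid. -/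
def Cocircuit (M : Matroid α) (C : Set α) : Prop := Circuit M✶ C

/-- `b` is internally active for the basis `B`: `b ∈ B` and `b` is the minimum of the
fundamental cocircuit `C*(B;b)`, the unique cocircuit contained in `(M.E \ B) ∪ {b}`. -/
def IntActive [LinearOrder α] (M : Matroid α) (B : Set α) (b : α) : Prop :=
  b ∈ B ∧ ∃ C, Cocircuit M C ∧ C ⊆ (M.E \ B) ∪ {b} ∧ b ∈ C ∧ ∀ x ∈ C, b ≤ x

/-- `e` is externally active for the basis `B`: `e ∈ M.E \ B` and `e` is the minimum of the
fundamental circuit `C(B;e)`, the unique circuit contained in `B ∪ {e}`. -/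
def ExtActive [LinearOrder α] (M : Matroid α) (B : Set α) (e : α) : Prop :=
  e ∈ M.E \ B ∧ ∃ C, Circuit M C ∧ C ⊆ B ∪ {e} ∧ e ∈ C ∧ ∀ x ∈ C, e ≤ x

/-- `Int(B)`, the set of internally active elements of `B`. -/
def IntSet [LinearOrder α] (M : Matroid α) (B : Set α) : Set α := {b | IntActive M B b}

/-- `Ext(B)`, the set of externally active elements of `B`. -/
def ExtSet [LinearOrder α] (M : Matroid α) (B : Set α) : Set α := {e | ExtActive M B e}

end AB

namespace AB
/-- The rank of a set `X` in a matroid `M`: the largest cardinality of an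
independent subset of `X`. -/
noncomputable def rank {α : Type*} (M : Matroid α) (X : Set α) : ℕ :=
  sSup {n : ℕ | ∃ I, I ⊆ X ∧ M.Indep I ∧ I.ncard = n}
end AB

namespace AB
open Set

variable {α : Type*} {M : Matroid α}

lemma circuit_iff_isCircuit {C : Set α} : Circuit M C ↔ M.IsCircuit C := by
  rw [Matroid.isCircuit_iff_forall_ssubset]
  exact Iff.rfl

lemma cocircuit_iff_isCocircuit {K : Set α} : Cocircuit M K ↔ M.IsCocircuit K :=
  circuit_iff_isCircuit

lemma rank_eq_ncard_of_isBasis [M.RankFinite] {I X : Set α} (hI : M.IsBasis I X) :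
    rank M X = I.ncard := by
  refine IsGreatest.csSup_eq ⟨⟨I, hI.subset, hI.indep, rfl⟩, ?_⟩
  rintro n ⟨J, hJX, hJ, rfl⟩
  obtain ⟨I', hI', hJI'⟩ := hJ.subset_isBasis_of_subset hJX hI.subset_ground
  calc J.ncard ≤ I'.ncard := ncard_le_ncard hJI' hI'.indep.finite
    _ = I.ncard := by rw [ncard_def, ncard_def, hI'.encard_eq_encard hI]

section Activity

variable [LinearOrder α] {B C : Set α} {b e : α}

lemma not_intActive_of_mem_circuit (hC : Circuit M C) (hCB : C ⊆ B ∪ {e}) (hbC : b ∈ C)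
    (heb : e < b) : ¬ IntActive M B b := by
  rintro ⟨-, K, hK, hKB, hbK, hbmin⟩
  refine (circuit_iff_isCircuit.1 hC).inter_isCocircuit_ne_singleton
    (cocircuit_iff_isCocircuit.1 hK) (e := b) (Subset.antisymm ?_ (by simpa using ⟨hbC, hbK⟩))
  rintro x ⟨hxC, hxK⟩
  rcases hKB hxK with ⟨-, hxB⟩ | hxb
  · rcases hCB hxC with hxB' | rfl
    · exact absurd hxB' hxB
    · exact absurd (hbmin x hxK) heb.not_ge
  · exact hxb

lemma ExtActive.mem_closure_inter {A : Set α} (he : ExtActive M B e)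
    (hA : B \ IntSet M B ⊆ A) : e ∈ M.closure (A ∩ B) := by
  obtain ⟨-, C, hC, hCB, heC, hmin⟩ := he
  have hCA : C \ {e} ⊆ A ∩ B := by
    rintro b ⟨hbC, hbe : b ≠ e⟩
    have hbB : b ∈ B := (hCB hbC).resolve_right hbe
    exact ⟨hA ⟨hbB, not_intActive_of_mem_circuit hC hCB hbC
      ((hmin b hbC).lt_of_ne (Ne.symm hbe))⟩, hbB⟩
  exact M.closure_subset_closure hCA
    ((circuit_iff_isCircuit.1 hC).mem_closure_sdiff_singleton_of_mem heC)

lemma isBasis_inter_base {A : Set α} (hB : M.IsBase B) (h1 : B \ IntSet M B ⊆ A)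
    (h2 : A ⊆ B ∪ ExtSet M B) : M.IsBasis (A ∩ B) A := by
  refine (hB.indep.subset inter_subset_right).isBasis_of_subset_of_subset_closure
    inter_subset_left fun a ha => ?_
  by_cases haB : a ∈ B
  · exact M.subset_closure _ (inter_subset_right.trans hB.subset_ground) ⟨ha, haB⟩
  · exact ExtActive.mem_closure_inter ((h2 ha).resolve_left haB) h1

lemma intSet_diff_eq_of_diff_subset {A : Set α} (h1 : B \ IntSet M B ⊆ A) :
    IntSet M B \ A = B \ A :=
  Subset.antisymm (fun _ hx => ⟨hx.1.1, hx.2⟩)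
    fun _ hx => ⟨by_contra fun hxI => hx.2 (h1 ⟨hx.1, hxI⟩), hx.2⟩

lemma extSet_inter_eq_of_subset_union {A : Set α} (h2 : A ⊆ B ∪ ExtSet M B) :
    ExtSet M B ∩ A = A \ B :=
  Subset.antisymm (fun _ hx => ⟨hx.2, hx.1.1.2⟩)
    fun _ hx => ⟨(h2 hx.1).resolve_left hx.2, hx.1⟩

end Activity

end AB

open Set in
/-- If `B` is a basis and `B \ Int(B) ⊆ A ⊆ B ∪ Ext(B)`, then
`|P_M(A)| = r(M) - r_M(A)` and `|Q_M(A)| = |A| - r_M(A)`, where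
`P_M(A) = Int(B) \ A` and `Q_M(A) = Ext(B) ∩ A`. -/
theorem stmt_6 {α : Type*} [LinearOrder α] (M : Matroid α) [M.Finite]
    (B : Set α) (hB : M.IsBase B) (A : Set α)
    (h1 : B \ AB.IntSet M B ⊆ A) (h2 : A ⊆ B ∪ AB.ExtSet M B) :
    (AB.IntSet M B \ A).ncard = AB.rank M M.E - AB.rank M A ∧
      (AB.ExtSet M B ∩ A).ncard = A.ncard - AB.rank M A := by
  have hAB := AB.isBasis_inter_base hB h1 h2
  have hrA : AB.rank M A = (A ∩ B).ncard := AB.rank_eq_ncard_of_isBasis hAB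
  have hrE : AB.rank M M.E = B.ncard := AB.rank_eq_ncard_of_isBasis hB.isBasis_ground
  have hB_card := ncard_inter_add_ncard_sdiff_eq_ncard B A hB.indep.finite
  have hA_card :=
    ncard_inter_add_ncard_sdiff_eq_ncard A B (M.ground_finite.subset hAB.subset_ground)
  rw [AB.intSet_diff_eq_of_diff_subset h1, AB.extSet_inter_eq_of_subset_union h2, hrE, hrA]
  rw [inter_comm] at hB_card
  omega
end

section
/- Let G = (V,E) be a finite directed graph with E linearly ordered, and suppose the associated oriented matroid is bounded with respect to p = min(E), i.e., G is acyclic and every directed cocycle of G contains p. Then G has a unique source s and a unique sink t, and these are the two endpoints of the edge p (G is bipolar with respect to p). -/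
namespace AB

variable {V E : Type*}

/-- `C` is (the edge set of) a directed cycle of the directed multigraph with edge-source
map `src` and edge-target map `tgt`: a nonempty cyclic sequence of distinct edges, each one
starting where the previous one ends. -/
def IsDirCycle (src tgt : E → V) (C : Set E) : Prop :=
  ∃ n : ℕ, ∃ hn : 0 < n, ∃ f : Fin n → E, Function.Injective f ∧
    (∀ i : Fin n, tgt (f i) = src (f ⟨(i.1 + 1) % n, Nat.mod_lt _ hn⟩)) ∧
    C = Set.range f

/-- The graph is acyclic: it has no directed cycle. -/
def Acyclic (src tgt : E → V) : Prop := ¬ ∃ C, IsDirCycle src tgt C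

/-- The directed cut determined by a vertex set `S`: all edges leaving `S`. -/
def dirCutOf (src tgt : E → V) (S : Set V) : Set E :=
  {e | src e ∈ S ∧ tgt e ∉ S}

/-- `D` is a directed cut: a nonempty set of edges all leaving some vertex set `S` which
no edge enters. -/
def IsDirCut (src tgt : E → V) (D : Set E) : Prop :=
  ∃ S : Set V, D = dirCutOf src tgt S ∧ dirCutOf tgt src S = ∅ ∧ D.Nonempty

/-- `D` is a directed cocycle (directed bond): a minimal directed cut. -/
def IsDirCocycle (src tgt : E → V) (D : Set E) : Prop :=
  IsDirCut src tgt D ∧ ∀ D', IsDirCut src tgt D' → D' ⊆ D → D' = D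

end AB


namespace AB

/-- Two vertices are connected in the underlying undirected graph. -/
def UConnected {V E : Type*} (src tgt : E → V) : Prop :=
  ∀ u v : V, Relation.ReflTransGen
    (fun a b => ∃ e : E, (src e = a ∧ tgt e = b) ∨ (src e = b ∧ tgt e = a)) u v

/-- A source: a vertex with no incoming edge. -/
def IsSource {V E : Type*} (src tgt : E → V) (v : V) : Prop := ∀ e : E, tgt e ≠ v

/-- A sink: a vertex with no outgoing edge. -/
def IsSink {V E : Type*} (src tgt : E → V) (v : V) : Prop := ∀ e : E, src e ≠ v

end AB

/-!
Since `E` is finite, every directed cut contains a minimal one, so `p` lies in every directed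
cut. If an edge `e` entered `src p`, the set of vertices from which `src e` is reachable would
have no entering edge and, by acyclicity, would not contain `src p`; the edges leaving it form a
directed cut avoiding `p`. Any other source `s` would give the directed cut of edges leaving
`{s}`, nonempty by connectivity, again avoiding `p`. Reversing every edge turns sinks into
sources. Acyclicity enters through closed walks, encoded as periodic edge sequences: one of
minimal period repeats no edge, so it is a directed cycle.
-/

namespace AB

variable {V E : Type*} {src tgt : E → V}

def IsClosedWalk (src tgt : E → V) (n : ℕ) (c : ℕ → E) : Prop :=
  Function.Periodic c n ∧ ∀ k, tgt (c k) = src (c (k + 1))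

def Reach (src tgt : E → V) : V → V → Prop :=
  Relation.ReflTransGen fun a b => ∃ e, src e = a ∧ tgt e = b

lemma exists_isClosedWalk_of_segment {c : ℕ → E} {i j : ℕ} (hij : i < j)
    (hc : ∀ k, i ≤ k → k < j → tgt (c k) = src (c (k + 1))) (hcij : c i = c j) :
    ∃ c', IsClosedWalk src tgt (j - i) c' := by
  set d := j - i with hdji
  have hd : 0 < d := Nat.sub_pos_of_lt hij
  refine ⟨fun k => c (i + k % d), fun k => by simp only [Nat.add_mod_right], fun k => ?_⟩
  have hk := Nat.mod_lt k hd
  dsimp only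
  rw [hc (i + k % d) (by omega) (by omega), ← Nat.mod_add_mod k d 1]
  rcases (Nat.add_one_le_of_lt hk).lt_or_eq with hlt | heq
  · rw [Nat.mod_eq_of_lt hlt, Nat.add_assoc]
  · rw [heq, Nat.mod_self, show i + k % d + 1 = j by omega, Nat.add_zero, hcij]

lemma exists_isDirCycle_of_isClosedWalk {n : ℕ} (hn : 0 < n) {c : ℕ → E}
    (hc : IsClosedWalk src tgt n c) : ∃ C, IsDirCycle src tgt C := by
  induction n using Nat.strong_induction_on generalizing c with
  | _ n ih =>
  by_cases hinj : Set.InjOn c (Set.Iio n)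
  · refine ⟨_, n, hn, fun i => c i, fun i j hij => Fin.ext (hinj i.2 j.2 hij), fun i => ?_, rfl⟩
    show tgt (c i) = src (c ((i + 1) % n))
    rw [hc.1.map_mod_nat]
    exact hc.2 i
  · obtain ⟨i, hi, j, hj, hcij, hne⟩ : ∃ i, i < n ∧ ∃ j, j < n ∧ c i = c j ∧ i ≠ j := by
      simpa [Set.InjOn] using hinj
    wlog hlt : i < j generalizing i j
    · exact this j hj i hi hcij.symm hne.symm (by omega)
    obtain ⟨c', hc'⟩ := exists_isClosedWalk_of_segment hlt (fun k _ _ => hc.2 k) hcij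
    exact ih (j - i) (by omega) (by omega) hc'

lemma Reach.exists_walk {a b : V} (h : Reach src tgt a b) {e e' : E} (he : tgt e = a)
    (he' : src e' = b) :
    ∃ n, ∃ c : ℕ → E, c 0 = e ∧ c (n + 1) = e' ∧ ∀ k ≤ n, tgt (c k) = src (c (k + 1)) := by
  induction h using Relation.ReflTransGen.head_induction_on generalizing e with
  | refl => exact ⟨0, fun k => if k = 0 then e else e', rfl, rfl, by simp [he, he']⟩
  | head hstep _ ih =>
    obtain ⟨f, rfl, rfl⟩ := hstep
    obtain ⟨n, c, hc0, hcn, hc⟩ := ih rfl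
    refine ⟨n + 1, fun k => Nat.casesOn k e c, rfl, hcn, fun k hk => ?_⟩
    cases k with
    | zero => simpa [hc0] using he
    | succ k => exact hc k (by omega)

lemma Acyclic.not_reach_tgt_src (h : Acyclic src tgt) (e : E) :
    ¬ Reach src tgt (tgt e) (src e) := by
  intro hreach
  obtain ⟨n, c, hc0, hcn, hc⟩ := hreach.exists_walk rfl rfl
  obtain ⟨c', hc'⟩ := exists_isClosedWalk_of_segment (Nat.succ_pos n)
    (fun k _ hk => hc k (by omega)) (hc0.trans hcn.symm)
  exact h (exists_isDirCycle_of_isClosedWalk (by omega) hc')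

lemma reach_swap {a b : V} : Reach tgt src a b ↔ Reach src tgt b a := by
  unfold Reach
  rw [← Relation.reflTransGen_swap]
  simp only [and_comm]

lemma IsDirCut.swap {D : Set E} (h : IsDirCut tgt src D) : IsDirCut src tgt D := by
  obtain ⟨S, rfl, hin, hne⟩ := h
  refine ⟨Sᶜ, ?_, ?_, hne⟩
  · ext e
    simp only [dirCutOf, Set.mem_ofPred_eq, Set.mem_compl_iff, not_not, and_comm]
  · simpa only [dirCutOf, Set.mem_compl_iff, not_not, and_comm] using hin

lemma UConnected.swap (h : UConnected src tgt) : UConnected tgt src := by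
  intro u v
  refine Relation.ReflTransGen.mono ?_ u v (h u v)
  rintro a b ⟨e, he⟩
  exact ⟨e, he.symm.imp And.symm And.symm⟩

lemma UConnected.mem_of_forall_mem_iff (h : UConnected src tgt) {A : Set V}
    (hA : ∀ e, src e ∈ A ↔ tgt e ∈ A) {u : V} (hu : u ∈ A) (v : V) : v ∈ A := by
  induction h u v with
  | refl => exact hu
  | tail _ hstep ih =>
    obtain ⟨e, ⟨rfl, rfl⟩ | ⟨rfl, rfl⟩⟩ := hstep
    · exact (hA e).1 ih
    · exact (hA e).2 ih

lemma exists_isDirCocycle_subset [Finite E] {D : Set E} (hD : IsDirCut src tgt D) :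
    ∃ D' ⊆ D, IsDirCocycle src tgt D' := by
  obtain ⟨D', hsub, hD', hmin⟩ := exists_minimal_le_of_wellFoundedLT _ D hD
  exact ⟨D', hsub, hD', fun D'' hD'' hle => le_antisymm hle (hmin hD'' hle)⟩

lemma mem_of_isDirCut [Finite E] {p : E} (hcocyc : ∀ D, IsDirCocycle src tgt D → p ∈ D)
    {D : Set E} (hD : IsDirCut src tgt D) : p ∈ D :=
  let ⟨_, hsub, hD'⟩ := exists_isDirCocycle_subset hD
  hsub (hcocyc _ hD')

lemma isSource_src {p : E} (hcut : ∀ D, IsDirCut src tgt D → p ∈ D)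
    (hback : ∀ e, ¬ Reach src tgt (tgt e) (src e)) :
    IsSource src tgt (src p) := by
  intro e he
  set T := {v | Reach src tgt v (src e)}
  have hp : src p ∉ T := he ▸ hback e
  have hT : IsDirCut src tgt (dirCutOf src tgt T) := by
    refine ⟨T, rfl, Set.eq_empty_of_forall_notMem ?_, e, Relation.ReflTransGen.refl, he ▸ hp⟩
    rintro f ⟨hf, hfT⟩
    exact hfT (Relation.ReflTransGen.head ⟨f, rfl, rfl⟩ hf)
  exact hp (hcut _ hT).1

lemma eq_src_of_isSource {p : E} (hcut : ∀ D, IsDirCut src tgt D → p ∈ D)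
    (hconn : UConnected src tgt) {s : V} (hs : IsSource src tgt s) :
    s = src p := by
  by_contra hne
  have hnonempty : (dirCutOf src tgt {s}).Nonempty := by
    by_contra hempty
    refine hne (hconn.mem_of_forall_mem_iff (A := {s}) (fun e => ?_) rfl (src p)).symm
    simp only [Set.mem_singleton_iff, hs e, iff_false]
    exact fun hse => hempty ⟨e, hse, hs e⟩
  have hin : dirCutOf tgt src {s} = ∅ :=
    Set.eq_empty_of_forall_notMem fun e he => hs e he.1
  exact hne (hcut _ ⟨{s}, rfl, hin, hnonempty⟩).1.symm

end AB

theorem stmt_17_general {V E : Type*} [Fintype E]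
    (src tgt : E → V) (hconn : AB.UConnected src tgt)
    (hacyc : AB.Acyclic src tgt)
    (p : E)
    (hcocyc : ∀ D, AB.IsDirCocycle src tgt D → p ∈ D) :
    (∃! s, AB.IsSource src tgt s) ∧ (∃! t, AB.IsSink src tgt t) ∧
      AB.IsSource src tgt (src p) ∧ AB.IsSink src tgt (tgt p) := by
  have hcut : ∀ D, AB.IsDirCut src tgt D → p ∈ D := fun _ => AB.mem_of_isDirCut hcocyc
  have hcut' : ∀ D, AB.IsDirCut tgt src D → p ∈ D := fun D hD => hcut D hD.swap
  have hback := hacyc.not_reach_tgt_src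
  have hsrc : AB.IsSource src tgt (src p) := AB.isSource_src hcut hback
  have hsnk : AB.IsSink src tgt (tgt p) :=
    AB.isSource_src hcut' fun e h => hback e (AB.reach_swap.1 h)
  exact ⟨⟨_, hsrc, fun _ => AB.eq_src_of_isSource hcut hconn⟩,
    ⟨_, hsnk, fun _ => AB.eq_src_of_isSource hcut' hconn.swap⟩, hsrc, hsnk⟩

/-- Let `G` be a finite connected directed graph with at least one edge,
with linearly ordered edge set, acyclic, and such that every directed cocycle contains the
minimum edge `p`. Then `G` has a unique source and a unique sink, and they are the two
endpoints of `p` (the source is the tail of `p` and the sink is its head). -/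
theorem stmt_17 {V E : Type*} [Fintype V] [Fintype E] [LinearOrder E]
    (src tgt : E → V) (hconn : AB.UConnected src tgt)
    (hacyc : AB.Acyclic src tgt)
    (p : E) (hp : ∀ e : E, p ≤ e)
    (hcocyc : ∀ D, AB.IsDirCocycle src tgt D → p ∈ D) :
    (∃! s, AB.IsSource src tgt s) ∧ (∃! t, AB.IsSink src tgt t) ∧
      AB.IsSource src tgt (src p) ∧ AB.IsSink src tgt (tgt p) :=
  stmt_17_general src tgt hconn hacyc p hcocyc
end
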